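/- arXiv:2405.04905 — 2 statements merged into one kernel-verified Lean document; each statement's English description precedes it below -/
import Mathlib

section
/- Let G be a δ-hyperbolic group with word metric d_S. Fix D ∈ ℕ and R > 0. Then there exist constants Δ ∈ ℕ (depending only on δ and D) and s ∈ ℕ (depending only on δ, D, R) such that for every pair of geodesic rays c, c' : ℕ → G with d_S(c(1), c'(1)) ≤ D, either d_S(c(t), Img(c')) ≤ Δ for all t ∈ ℕ, or there is a minimal t₀ ∈ ℕ with d_S(c(t₀), Img(c')) > Δ, and in that case d_S(c(t₀ + s), Img(c')) > R. -/
/-- The word metric on a group `G` with respect to a generating set `S`. -/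
noncomputable def wordDist {G : Type*} [Group G] (S : Set G) (g h : G) : ℕ :=
  sInf {n | ∃ l : List G, (∀ x ∈ l, x ∈ S) ∧ l.length = n ∧ g = h * l.prod}

/-- `S` is a finite symmetric generating set of `G`. -/
def IsFinSymmGenSet {G : Type*} [Group G] (S : Set G) : Prop :=
  S.Finite ∧ (∀ s ∈ S, s⁻¹ ∈ S) ∧ Subgroup.closure S = ⊤

/-- A discrete geodesic segment from `g` to `h` with respect to the integer-valued
metric `d`, parametrized on `[0, d g h]`. -/
def IsGeodesicSeg {G : Type*} (d : G → G → ℕ) (c : ℕ → G) (g h : G) : Prop :=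
  c 0 = g ∧ c (d g h) = h ∧
    ∀ i j : ℕ, i ≤ d g h → j ≤ d g h → d (c i) (c j) = Nat.dist i j

/-- A discrete geodesic ray: an isometric embedding `c : ℕ → G`. -/
def IsGeodesicRay {G : Type*} (d : G → G → ℕ) (c : ℕ → G) : Prop :=
  ∀ i j : ℕ, d (c i) (c j) = Nat.dist i j

/-- Two rays are asymptotic if their images are at finite Hausdorff distance. -/
def Asymptotic {G : Type*} (d : G → G → ℕ) (c c' : ℕ → G) : Prop :=
  ∃ K : ℕ, (∀ t : ℕ, ∃ s : ℕ, d (c t) (c' s) ≤ K) ∧ (∀ s : ℕ, ∃ t : ℕ, d (c' s) (c t) ≤ K)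

/-- Rips δ-hyperbolicity of the integer-valued metric `d`: each side of any discrete
geodesic triangle is contained in the δ-neighborhood of the union of the other two sides. -/
def DiscHyperbolic {G : Type*} (d : G → G → ℕ) (δ : ℕ) : Prop :=
  ∀ x y z : G, ∀ cxy cyz czx : ℕ → G,
    IsGeodesicSeg d cxy x y → IsGeodesicSeg d cyz y z → IsGeodesicSeg d czx z x →
    ∀ i ≤ d x y, ∃ p ∈ cyz '' Set.Iic (d y z) ∪ czx '' Set.Iic (d z x), d (cxy i) p ≤ δ

/-!
Join `c 0` to `c' 0` by a segment of length at most `D + 2`. If `c (t₀ + s)` were `R`-close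
to some `c' u`, the geodesic quadrilateral `c 0, c (t₀ + s), c' u, c' 0` would be `2δ`-thin,
so `c t₀` would be `2δ`-close to one of its three other sides. It cannot be close to the short
side at `c (t₀ + s)` once `s > R + 2δ`, and closeness to either of the remaining sides puts
`c t₀` within `2δ + D + 2` of the image of `c'`.
-/

section IntegerMetric

variable {X : Type*} {d : X → X → ℕ}

theorem IsGeodesicSeg.dist_apply_le {γ : ℕ → X} {g h : X} (hγ : IsGeodesicSeg d γ g h)
    {i j : ℕ} (hi : i ≤ d g h) (hj : j ≤ d g h) : d (γ i) (γ j) ≤ d g h := by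
  rw [hγ.2.2 i j hi hj]
  rcases le_total i j with hij | hji
  · rw [Nat.dist_eq_sub_of_le hij]; omega
  · rw [Nat.dist_eq_sub_of_le_right hji]; omega

theorem isGeodesicSeg_of_dist_le (htri : ∀ x y z, d x z ≤ d x y + d y z)
    (hsymm : ∀ x y, d x y = d y x) {γ : ℕ → X} {g h : X} (h0 : γ 0 = g)
    (hend : γ (d g h) = h) (hle : ∀ i j, i ≤ j → j ≤ d g h → d (γ i) (γ j) ≤ j - i) :
    IsGeodesicSeg d γ g h := by
  have heq : ∀ i j, i ≤ j → j ≤ d g h → d (γ i) (γ j) = j - i := by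
    intro i j hij hj
    have h0i := hle 0 i (Nat.zero_le i) (hij.trans hj)
    have hjn := hle j (d g h) hj le_rfl
    have hsplit := (htri (γ 0) (γ i) (γ (d g h))).trans
      (Nat.add_le_add_left (htri (γ i) (γ j) (γ (d g h))) _)
    rw [h0, hend] at hsplit
    rw [h0] at h0i
    rw [hend] at hjn
    have := hle i j hij hj
    omega
  refine ⟨h0, hend, fun i j hi hj => ?_⟩
  rcases le_total i j with hij | hji
  · rw [heq i j hij hj, Nat.dist_eq_sub_of_le hij]
  · rw [hsymm, heq j i hji hi, Nat.dist_eq_sub_of_le_right hji]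

theorem IsGeodesicRay.isGeodesicSeg {c : ℕ → X} (hc : IsGeodesicRay d c) (n : ℕ) :
    IsGeodesicSeg d c (c 0) (c n) := by
  have hn : d (c 0) (c n) = n := by rw [hc]; simp [Nat.dist]
  exact ⟨rfl, by rw [hn], fun i j _ _ => hc i j⟩

theorem IsGeodesicRay.dist_zero_le (htri : ∀ x y z, d x z ≤ d x y + d y z) {c c' : ℕ → X}
    (hc : IsGeodesicRay d c) (hc' : IsGeodesicRay d c') :
    d (c 0) (c' 0) ≤ d (c 1) (c' 1) + 2 := by
  have h01 : d (c 0) (c 1) = 1 := by rw [hc]; simp [Nat.dist]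
  have h10 : d (c' 1) (c' 0) = 1 := by rw [hc']; simp [Nat.dist]
  have := htri (c 0) (c 1) (c' 0)
  have := htri (c 1) (c' 1) (c' 0)
  omega

variable {δ : ℕ}

/-- Cut along the diagonal from `e` to `a` into two `δ`-thin triangles. -/
theorem DiscHyperbolic.exists_dist_le_of_quadrilateral (hhyp : DiscHyperbolic d δ)
    (htri : ∀ x y z, d x z ≤ d x y + d y z) (hgeo : ∀ x y, ∃ γ, IsGeodesicSeg d γ x y)
    {a b e f : X} {p q r w : ℕ → X} (hp : IsGeodesicSeg d p a b) (hq : IsGeodesicSeg d q b e)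
    (hr : IsGeodesicSeg d r a f) (hw : IsGeodesicSeg d w f e) {i : ℕ} (hi : i ≤ d a b) :
    ∃ x ∈ q '' Set.Iic (d b e) ∪ r '' Set.Iic (d a f) ∪ w '' Set.Iic (d f e),
      d (p i) x ≤ 2 * δ := by
  obtain ⟨τ, hτ⟩ := hgeo e a
  obtain ⟨x, hx, hpx⟩ := hhyp a b e p q τ hp hq hτ i hi
  rcases hx with hxq | ⟨j, hj, rfl⟩
  · exact ⟨x, Or.inl (Or.inl hxq), by omega⟩
  obtain ⟨y, hy, hτy⟩ := hhyp e a f τ r w hτ hr hw j hj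
  refine ⟨y, ?_, (htri _ (τ j) _).trans (by omega)⟩
  rcases hy with hyr | hyw
  exacts [Or.inl (Or.inr hyr), Or.inr hyw]

theorem DiscHyperbolic.exists_dist_ray_le (hhyp : DiscHyperbolic d δ)
    (htri : ∀ x y z, d x z ≤ d x y + d y z) (hgeo : ∀ x y, ∃ γ, IsGeodesicSeg d γ x y)
    {c c' : ℕ → X} (hc : IsGeodesicRay d c) (hc' : IsGeodesicRay d c') {t n u : ℕ}
    (hnear : d (c n) (c' u) + 2 * δ < n - t) :
    ∃ v, d (c t) (c' v) ≤ 2 * δ + d (c 0) (c' 0) := by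
  obtain ⟨σ, hσ⟩ := hgeo (c n) (c' u)
  obtain ⟨ρ, hρ⟩ := hgeo (c 0) (c' 0)
  have hn : d (c 0) (c n) = n := by rw [hc]; simp [Nat.dist]
  obtain ⟨x, hx, hdx⟩ := hhyp.exists_dist_le_of_quadrilateral htri hgeo (hc.isGeodesicSeg n) hσ
    hρ (hc'.isGeodesicSeg u) (i := t) (by omega)
  rcases hx with (⟨j, hj, rfl⟩ | ⟨k, hk, rfl⟩) | ⟨k, -, rfl⟩
  · have hσj : d (σ j) (c n) ≤ d (c n) (c' u) := hσ.1 ▸ hσ.dist_apply_le hj (Nat.zero_le _)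
    have htn : d (c t) (c n) = n - t := by rw [hc, Nat.dist_eq_sub_of_le (by omega)]
    have := htri (c t) (σ j) (c n)
    omega
  · have hρk : d (ρ k) (c' 0) ≤ d (c 0) (c' 0) := by
      simpa only [hρ.2.1] using hρ.dist_apply_le hk le_rfl
    exact ⟨0, (htri _ (ρ k) _).trans (by omega)⟩
  · exact ⟨k, hdx.trans (Nat.le_add_right _ _)⟩

end IntegerMetric

section WordMetric

variable {G : Type*} [Group G] {S : Set G}

theorem wordDist_le_length {g h : G} {l : List G} (hl : ∀ x ∈ l, x ∈ S)
    (hprod : g = h * l.prod) : wordDist S g h ≤ l.length :=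
  Nat.sInf_le ⟨l, hl, rfl, hprod⟩

theorem IsFinSymmGenSet.exists_list_prod_eq (hS : IsFinSymmGenSet S) (g h : G) :
    ∃ l : List G, (∀ x ∈ l, x ∈ S) ∧ g = h * l.prod := by
  obtain ⟨-, hsymm, hgen⟩ := hS
  have hmem : h⁻¹ * g ∈ Subgroup.closure S := hgen ▸ Subgroup.mem_top _
  rw [← Subgroup.mem_toSubmonoid, Subgroup.closure_toSubmonoid] at hmem
  obtain ⟨l, hl, hprod⟩ := Submonoid.exists_list_of_mem_closure hmem
  refine ⟨l, fun x hx => ?_, by rw [hprod, mul_inv_cancel_left]⟩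
  rcases hl x hx with hxS | hxS
  · exact hxS
  · simpa using hsymm _ hxS

theorem IsFinSymmGenSet.exists_list_length_eq_wordDist (hS : IsFinSymmGenSet S) (g h : G) :
    ∃ l : List G, (∀ x ∈ l, x ∈ S) ∧ l.length = wordDist S g h ∧ g = h * l.prod := by
  obtain ⟨l, hl, hprod⟩ := hS.exists_list_prod_eq g h
  exact Nat.sInf_mem
    (s := {n | ∃ l : List G, (∀ x ∈ l, x ∈ S) ∧ l.length = n ∧ g = h * l.prod})
    ⟨l.length, l, hl, rfl, hprod⟩

theorem IsFinSymmGenSet.wordDist_comm (hS : IsFinSymmGenSet S) (g h : G) :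
    wordDist S g h = wordDist S h g := by
  suffices hle : ∀ g h : G, wordDist S h g ≤ wordDist S g h from le_antisymm (hle h g) (hle g h)
  intro g h
  obtain ⟨l, hl, hlen, rfl⟩ := hS.exists_list_length_eq_wordDist g h
  rw [← hlen, ← List.length_reverse, ← List.length_map (f := fun x : G => x⁻¹)]
  refine wordDist_le_length (fun x hx => ?_) ?_
  · obtain ⟨y, hy, rfl⟩ := List.mem_map.mp hx
    exact hS.2.1 y (hl y (List.mem_reverse.mp hy))
  · rw [List.map_reverse, ← List.prod_inv_reverse, mul_inv_cancel_right]

theorem IsFinSymmGenSet.wordDist_triangle (hS : IsFinSymmGenSet S) (g h k : G) :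
    wordDist S g k ≤ wordDist S g h + wordDist S h k := by
  obtain ⟨l₁, hl₁, hlen₁, hgh⟩ := hS.exists_list_length_eq_wordDist g h
  obtain ⟨l₂, hl₂, hlen₂, hhk⟩ := hS.exists_list_length_eq_wordDist h k
  calc wordDist S g k ≤ (l₂ ++ l₁).length := by
        refine wordDist_le_length (fun x hx => ?_) ?_
        · exact (List.mem_append.mp hx).elim (hl₂ x) (hl₁ x)
        · rw [List.prod_append, ← mul_assoc, ← hhk, ← hgh]
    _ = wordDist S g h + wordDist S h k := by rw [List.length_append, hlen₁, hlen₂, add_comm]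

theorem IsFinSymmGenSet.exists_isGeodesicSeg (hS : IsFinSymmGenSet S) (g h : G) :
    ∃ γ, IsGeodesicSeg (wordDist S) γ g h := by
  obtain ⟨l, hl, hlen, hprod⟩ := hS.exists_list_length_eq_wordDist g h
  refine ⟨fun i => h * (l.take (l.length - i)).prod, isGeodesicSeg_of_dist_le hS.wordDist_triangle
    hS.wordDist_comm (by simp [hprod]) (by simp [← hlen]) fun i j hij hj => ?_⟩
  have hsplit : l.length - i = (l.length - j) + (j - i) := by omega
  calc wordDist S _ _ ≤ ((l.drop (l.length - j)).take (j - i)).length := by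
        refine wordDist_le_length
          (fun x hx => hl x (List.drop_subset _ _ (List.take_subset _ _ hx))) ?_
        rw [hsplit, List.take_add, List.prod_append, mul_assoc]
    _ ≤ j - i := List.length_take_le _ _

end WordMetric

/-- two geodesic rays starting `D`-close either stay uniformly `Δ`-close,
or diverge beyond any `R` within a uniformly bounded time `s` after first exceeding `Δ`;
`Δ` depends only on `δ, D` and `s` additionally on `R`. -/
theorem rays_uniform_divergence {G : Type*} [Group G] (S : Set G)
    (hS : IsFinSymmGenSet S) (δ : ℕ) (hhyp : DiscHyperbolic (wordDist S) δ) (D : ℕ) :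
    ∃ Δ : ℕ, ∀ R : ℝ, 0 < R → ∃ s : ℕ,
      ∀ c c' : ℕ → G, IsGeodesicRay (wordDist S) c → IsGeodesicRay (wordDist S) c' →
        wordDist S (c 1) (c' 1) ≤ D →
        (∀ t : ℕ, ∃ u : ℕ, wordDist S (c t) (c' u) ≤ Δ) ∨
        (∃ t₀ : ℕ, (∀ u : ℕ, Δ < wordDist S (c t₀) (c' u)) ∧
          (∀ t < t₀, ∃ u : ℕ, wordDist S (c t) (c' u) ≤ Δ) ∧
          (∀ u : ℕ, R < (wordDist S (c (t₀ + s)) (c' u) : ℝ))) := by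
  classical
  refine ⟨2 * δ + D + 2, fun R _ => ⟨⌈R⌉₊ + 2 * δ + 1, fun c c' hc hc' hD => ?_⟩⟩
  by_cases hclose : ∀ t, ∃ u, wordDist S (c t) (c' u) ≤ 2 * δ + D + 2
  · exact Or.inl hclose
  push Not at hclose
  refine Or.inr ⟨Nat.find hclose, Nat.find_spec hclose,
    fun t ht => by simpa using Nat.find_min hclose ht, fun u => ?_⟩
  by_contra! hnear
  set t₀ := Nat.find hclose
  have hceil : wordDist S (c (t₀ + (⌈R⌉₊ + 2 * δ + 1))) (c' u) ≤ ⌈R⌉₊ := by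
    exact_mod_cast hnear.trans (Nat.le_ceil R)
  obtain ⟨v, hv⟩ := hhyp.exists_dist_ray_le hS.wordDist_triangle hS.exists_isGeodesicSeg hc hc'
    (t := t₀) (u := u) (n := t₀ + (⌈R⌉₊ + 2 * δ + 1)) (by omega)
  have h00 := hc.dist_zero_le hS.wordDist_triangle hc'
  have hfar : 2 * δ + D + 2 < wordDist S (c t₀) (c' v) := Nat.find_spec hclose v
  omega
end

section
/- Let G be a hyperbolic group with finite symmetric generating set S and suppose G has a distinguished geodesic structure λ : G → S*. Then for every geodesic ray c : ℕ → G there exists a directed system of geodesics (DSG) m : G → S such that for every g ∈ G the geodesic ray c_m^g is at bounded Hausdorff distance from c. -/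
/-- The ray determined by a map `m : G → G` starting at `g`:
each step multiplies by the value of `m` at the current position. -/
def dsgRay {G : Type*} [Group G] (m : G → G) (g : G) : ℕ → G
  | 0 => g
  | n + 1 => dsgRay m g n * m (dsgRay m g n)

/-- A directed system of geodesics (DSG): a map `m : G → S` all of whose rays are
geodesic rays, any two of which are asymptotic. -/
def IsDSG {G : Type*} [Group G] (d : G → G → ℕ) (S : Set G) (m : G → G) : Prop :=
  (∀ g : G, m g ∈ S) ∧ (∀ g : G, IsGeodesicRay d (dsgRay m g)) ∧
    ∀ g h : G, Asymptotic d (dsgRay m g) (dsgRay m h)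

/-- The space of DSGs on `G`. -/
def DSGs {G : Type*} [Group G] (d : G → G → ℕ) (S : Set G) := {m : G → G // IsDSG d S m}

/-- The space of geodesic rays in `G`. -/
def GeodesicRays {G : Type*} (d : G → G → ℕ) := {c : ℕ → G // IsGeodesicRay d c}

/-- The Gromov boundary of `G`, as the quotient of the space of geodesic rays by the
relation of being asymptotic (finite Hausdorff distance). -/
def GromovBoundary {G : Type*} (d : G → G → ℕ) :=
  Quot (fun c c' : GeodesicRays d => Asymptotic d c.1 c'.1)

/-- The topology on geodesic rays: uniform convergence on bounded sets, which for the
discrete group `G` is the product (pointwise convergence) topology. -/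
def raysTop {G : Type*} (d : G → G → ℕ) : TopologicalSpace (GeodesicRays d) :=
  TopologicalSpace.induced (fun c => (c.1 : ℕ → G))
    (@Pi.topologicalSpace ℕ (fun _ => G) (fun _ => ⊥))

/-- The quotient topology on the Gromov boundary. -/
def boundaryTop {G : Type*} (d : G → G → ℕ) : TopologicalSpace (GromovBoundary d) :=
  (raysTop d).coinduced (Quot.mk _)

/-- The canonical surjection `Q : 𝒟 → ∂G` sending a DSG to the class of its ray at `1`. -/
def Qmap {G : Type*} [Group G] (d : G → G → ℕ) (S : Set G) (m : DSGs d S) :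
    GromovBoundary d :=
  Quot.mk _ ⟨dsgRay m.1 1, m.2.2.1 1⟩

/-- The topology `τ` on the space of DSGs, generated by the neighborhoods `𝒩_m^{l,D}`. -/
def dsgTop {G : Type*} [Group G] (d : G → G → ℕ) (S : Set G) (δ : ℕ) :
    TopologicalSpace (DSGs d S) :=
  TopologicalSpace.generateFrom
    {U | ∃ (m : DSGs d S) (l D : ℕ), 8 * δ < l ∧ 2 * δ ≤ D ∧
      U = {m' : DSGs d S | ∀ i ≤ l, d (dsgRay m.1 1 i) (dsgRay m'.1 1 i) ≤ D}}

/-- The word metric is left-invariant. -/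
theorem wordDist_mul_left {G : Type*} [Group G] (S : Set G) (a g h : G) :
    wordDist S (a * g) (a * h) = wordDist S g h := by
  unfold wordDist
  congr 1
  ext n
  constructor
  · rintro ⟨l, h1, h2, h3⟩
    exact ⟨l, h1, h2, by rw [mul_assoc] at h3; exact mul_left_cancel h3⟩
  · rintro ⟨l, h1, h2, h3⟩
    exact ⟨l, h1, h2, by rw [mul_assoc, ← h3]⟩

/-- The canonical action of `G` on its Gromov boundary, induced by left translation
of geodesic rays. -/
def boundaryAct {G : Type*} [Group G] (S : Set G) (g : G) :
    GromovBoundary (wordDist S) → GromovBoundary (wordDist S) :=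
  Quot.map
    (fun c => ⟨fun t => g * c.1 t, fun i j => by
      rw [wordDist_mul_left]; exact c.2 i j⟩)
    (by
      rintro c c' ⟨K, h1, h2⟩
      refine ⟨K, fun t => ?_, fun s => ?_⟩
      · obtain ⟨s, hs⟩ := h1 t
        exact ⟨s, by simpa [wordDist_mul_left] using hs⟩
      · obtain ⟨t, ht⟩ := h2 s
        exact ⟨t, by simpa [wordDist_mul_left] using ht⟩)

/-- A distinguished geodesic structure: a prefix-closed choice of geodesic words. -/
def IsDistGeodStructure {G : Type*} [Group G] (S : Set G) (lamda : G → List G) : Prop :=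
  ∀ g : G, (∀ x ∈ lamda g, x ∈ S) ∧ (lamda g).prod = g ∧
    (lamda g).length = wordDist S g 1 ∧
    lamda ((lamda g).dropLast.prod) = (lamda g).dropLast


namespace DSGAux

variable {G : Type*} [Group G] {S : Set G}

theorem wd_le' {g h : G} {l : List G} (hl : ∀ x ∈ l, x ∈ S) (hprod : g = h * l.prod) :
    wordDist S g h ≤ l.length := Nat.sInf_le ⟨l, hl, rfl, hprod⟩

theorem wd_self (g : G) : wordDist S g g = 0 :=
  Nat.le_zero.mp (wd_le' (l := []) (by simp) (by simp))

theorem exists_word (hsym : ∀ s ∈ S, s⁻¹ ∈ S) (hgen : Subgroup.closure S = ⊤) (g h : G) :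
    ∃ l : List G, (∀ x ∈ l, x ∈ S) ∧ l.length = wordDist S g h ∧ g = h * l.prod := by
  have hx : h⁻¹ * g ∈ Submonoid.closure (S ∪ S⁻¹) := by
    rw [← Subgroup.closure_toSubmonoid, hgen]; trivial
  obtain ⟨l, h1, h2⟩ := Submonoid.exists_list_of_mem_closure hx
  have hne : {n | ∃ l : List G, (∀ x ∈ l, x ∈ S) ∧ l.length = n ∧ g = h * l.prod}.Nonempty := by
    refine ⟨l.length, l, fun y hy => ?_, rfl, by rw [h2]; group⟩
    rcases h1 y hy with h | h
    · exact h
    · simpa using hsym _ h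
  exact Nat.sInf_mem hne

theorem wd_symm (hsym : ∀ s ∈ S, s⁻¹ ∈ S) (hgen : Subgroup.closure S = ⊤) (g h : G) :
    wordDist S g h = wordDist S h g := by
  have key : ∀ a b : G, wordDist S b a ≤ wordDist S a b := by
    intro a b
    obtain ⟨l, hl, hlen, hprod⟩ := exists_word hsym hgen a b
    refine le_trans (wd_le' (l := (l.map (fun x => x⁻¹)).reverse)
      (fun y hy => ?_) ?_) (by simp [hlen])
    · simp only [List.mem_reverse, List.mem_map] at hy
      obtain ⟨z, hz, rfl⟩ := hy
      exact hsym z (hl z hz)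
    · rw [← List.prod_inv_reverse, hprod]; group
  exact le_antisymm (key h g) (key g h)

theorem wd_triangle (hsym : ∀ s ∈ S, s⁻¹ ∈ S) (hgen : Subgroup.closure S = ⊤) (a b c : G) :
    wordDist S a c ≤ wordDist S a b + wordDist S b c := by
  obtain ⟨l1, hl1, hlen1, hprod1⟩ := exists_word hsym hgen a b
  obtain ⟨l2, hl2, hlen2, hprod2⟩ := exists_word hsym hgen b c
  have hsp : a = c * (l2 ++ l1).prod := by
    rw [List.prod_append, ← mul_assoc, ← hprod2, ← hprod1]
  refine le_trans (wd_le' (fun y hy => ?_) hsp) (by simp [hlen1, hlen2]; omega)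
  rcases List.mem_append.mp hy with h | h
  · exact hl2 y h
  · exact hl1 y h

theorem nat_dist_def (a b : ℕ) : Nat.dist a b = a - b + (b - a) := rfl

theorem geo_word (hsym : ∀ s ∈ S, s⁻¹ ∈ S) (hgen : Subgroup.closure S = ⊤)
    (h : G) {l : List G} (hl : ∀ x ∈ l, x ∈ S)
    (hgeo : l.length = wordDist S (h * l.prod) h) :
    ∀ i j : ℕ, i ≤ l.length → j ≤ l.length →
      wordDist S (h * (l.take i).prod) (h * (l.take j).prod) = Nat.dist i j := by
  have key : ∀ i j : ℕ, i ≤ j → j ≤ l.length →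
      wordDist S (h * (l.take j).prod) (h * (l.take i).prod) = j - i := by
    intro i j hij hjl
    have hsplit : (l.take i) ++ ((l.take j).drop i) = l.take j := by
      conv_lhs => rw [show l.take i = (l.take j).take i by rw [List.take_take, min_eq_left hij]]
      exact List.take_append_drop i (l.take j)
    have hxj : h * (l.take j).prod = (h * (l.take i).prod) * ((l.take j).drop i).prod := by
      rw [mul_assoc, ← List.prod_append, hsplit]
    have hmidlen : ((l.take j).drop i).length = j - i := by
      simp [Nat.min_eq_left hjl]
    have hle : wordDist S (h * (l.take j).prod) (h * (l.take i).prod) ≤ j - i := by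
      refine le_trans (wd_le' (fun y hy => hl y ?_) hxj) (le_of_eq hmidlen)
      exact List.mem_of_mem_take (List.mem_of_mem_drop hy)
    have h1 : wordDist S (h * l.prod) (h * (l.take j).prod) ≤ l.length - j := by
      have hq : h * l.prod = (h * (l.take j).prod) * (l.drop j).prod := by
        rw [mul_assoc, ← List.prod_append, List.take_append_drop]
      refine le_trans (wd_le' (fun y hy => hl y (List.mem_of_mem_drop hy)) hq) (by simp)
    have h2 : wordDist S (h * (l.take i).prod) h ≤ i := by
      refine le_trans (wd_le' (fun y hy => hl y (List.mem_of_mem_take hy)) rfl) ?_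
      simp only [List.length_take]
      omega
    have htri : l.length ≤ (l.length - j) + (wordDist S (h * (l.take j).prod) (h * (l.take i).prod) + i) := by
      calc l.length = wordDist S (h * l.prod) h := hgeo
        _ ≤ wordDist S (h * l.prod) (h * (l.take j).prod)
            + wordDist S (h * (l.take j).prod) h := wd_triangle hsym hgen _ _ _
        _ ≤ (l.length - j) + (wordDist S (h * (l.take j).prod) (h * (l.take i).prod)
            + wordDist S (h * (l.take i).prod) h) :=
              add_le_add h1 (wd_triangle hsym hgen _ _ _)
        _ ≤ _ := by gcongr
    omega
  intro i j hi hj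
  rcases le_total i j with hij | hij
  · rw [wd_symm hsym hgen, key i j hij hj, nat_dist_def]; omega
  · rw [key j i hij hi, nat_dist_def]; omega

theorem dsgRay_succ (m : G → G) (g : G) (n : ℕ) :
    dsgRay m g (n + 1) = dsgRay m g n * m (dsgRay m g n) := rfl

end DSGAux

/-- if a hyperbolic group has a distinguished geodesic structure, then every
geodesic ray is at bounded Hausdorff distance from every ray of some DSG. -/
theorem exists_DSG_for_ray {G : Type*} [Group G] (S : Set G)
    (hS : IsFinSymmGenSet S) (δ : ℕ) (hhyp : DiscHyperbolic (wordDist S) δ)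
    (lamda : G → List G) (hlamda : IsDistGeodStructure S lamda)
    (c : ℕ → G) (hc : IsGeodesicRay (wordDist S) c) :
    ∃ m : G → G, IsDSG (wordDist S) S m ∧
      ∀ g : G, Asymptotic (wordDist S) (dsgRay m g) c := by
  classical
  open DSGAux in
  obtain ⟨hSfin, hsym, hgen⟩ := hS
  -- the geodesic words from `c n` to `g`
  let w : ℕ → G → List G := fun n g => lamda ((c n)⁻¹ * g)
  let pred : ℕ → G → G := fun n g => c n * ((w n g).dropLast).prod
  let mraw : ℕ → G → G := fun n g => g⁻¹ * pred n g
  have hwdef : ∀ n (g : G), w n g = lamda ((c n)⁻¹ * g) := fun _ _ => rfl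
  have hpreddef : ∀ n (g : G), pred n g = c n * ((w n g).dropLast).prod := fun _ _ => rfl
  have hwS : ∀ n (g : G), ∀ x ∈ w n g, x ∈ S := fun n g => (hlamda _).1
  have hwprod : ∀ n (g : G), (w n g).prod = (c n)⁻¹ * g := fun n g => (hlamda _).2.1
  have hgprod : ∀ n (g : G), c n * (w n g).prod = g := by
    intro n g; rw [hwprod]; group
  have hwlen : ∀ n (g : G), (w n g).length = wordDist S g (c n) := by
    intro n g
    have h1 := (hlamda ((c n)⁻¹ * g)).2.2.1
    have h2 := wordDist_mul_left S (c n) ((c n)⁻¹ * g) 1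
    simp only [mul_inv_cancel_left, mul_one] at h2
    exact h1.trans h2.symm
  have hstep : ∀ n (g : G), g * mraw n g = pred n g := by
    intro n g; simp only [mraw, mul_inv_cancel_left]
  -- coherence of the tree of geodesics toward `c n`
  have hWseg : ∀ n (g : G), ∀ k ≤ (w n g).length,
      w n (c n * ((w n g).take k).prod) = (w n g).take k := by
    intro n g k hk
    obtain ⟨j, hj⟩ : ∃ j, k + j = (w n g).length := ⟨_, Nat.add_sub_cancel' hk⟩
    clear hk
    induction j generalizing k with
    | zero =>
      have hkl : k = (w n g).length := by omega
      rw [hkl, List.take_length, hgprod]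
    | succ j ih =>
      have hk1 := ih (k + 1) (by omega)
      have hdl : ((w n g).take (k + 1)).dropLast = (w n g).take k := by
        rw [List.dropLast_eq_take, List.length_take, List.take_take]
        congr 1
        omega
      have h4 := (hlamda ((c n)⁻¹ * (c n * ((w n g).take (k + 1)).prod))).2.2.2
      rw [← hwdef, hk1, hdl] at h4
      show lamda ((c n)⁻¹ * (c n * ((w n g).take k).prod)) = _
      rw [inv_mul_cancel_left]
      exact h4
  have hpred_seg : ∀ n (g : G), ∀ k, 1 ≤ k → k ≤ (w n g).length →
      pred n (c n * ((w n g).take k).prod) = c n * ((w n g).take (k - 1)).prod := by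
    intro n g k h1 h2
    rw [hpreddef, hWseg n g k h2]
    congr 2
    rw [List.dropLast_eq_take, List.length_take, List.take_take]
    congr 1
    omega
  have hmrawS : ∀ n (g : G), g ≠ c n → mraw n g ∈ S := by
    intro n g hg
    have hne : w n g ≠ [] := by
      intro h
      apply hg
      have := hgprod n g
      rw [h] at this
      simpa using this.symm
    rcases List.eq_nil_or_concat (w n g) with h | ⟨l, a, hla⟩
    · exact absurd h hne
    have h1 : c n * (l.prod * a) = g := by
      have h2 := hgprod n g
      rw [hla] at h2
      simpa [List.concat_eq_append, List.prod_append] using h2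
    have h2 : pred n g = c n * l.prod := by
      rw [hpreddef, hla]
      simp [List.concat_eq_append]
    have h3 : mraw n g = a⁻¹ := by
      show g⁻¹ * pred n g = a⁻¹
      rw [h2, ← h1]
      group
    rw [h3]
    refine hsym _ (hwS n g _ ?_)
    rw [hla]
    simp
  -- an ultrafilter extending the cofinite filter
  obtain ⟨U, hU⟩ := Ultrafilter.exists_le (Filter.cofinite : Filter ℕ)
  have hcof : ∀ s : Set ℕ, sᶜ.Finite → s ∈ U := fun s hs => hU (Filter.mem_cofinite.mpr hs)
  have hcinj : ∀ i j, c i = c j → i = j := by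
    intro i j hij
    have h1 := hc i j
    rw [hij, wd_self] at h1
    rw [nat_dist_def] at h1
    omega
  have hgnec : ∀ g : G, {n | g ≠ c n} ∈ U := by
    intro g
    apply hcof
    apply Set.Subsingleton.finite
    intro a ha b hb
    simp only [Set.mem_compl_iff, Set.mem_setOf_eq, not_not] at ha hb
    exact hcinj a b (ha ▸ hb ▸ rfl)
  have hfar : ∀ (g : G) (k : ℕ), {n | k ≤ wordDist S g (c n)} ∈ U := by
    intro g k
    apply hcof
    apply Set.Finite.subset (Set.finite_Iio (k + wordDist S (c 0) g))
    intro n hn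
    simp only [Set.mem_compl_iff, Set.mem_setOf_eq, not_le] at hn
    have h1 : wordDist S (c 0) (c n) = n := by rw [hc 0 n, nat_dist_def]; omega
    have h2 := wd_triangle hsym hgen (c 0) g (c n)
    simp only [Set.mem_Iio]
    omega
  -- the ultralimit direction
  have hMex : ∀ g : G, ∃ s, s ∈ S ∧ {n | mraw n g = s} ∈ U := by
    intro g
    have hmem : S ∈ Ultrafilter.map (fun n => mraw n g) U := by
      rw [Ultrafilter.mem_map]
      exact Filter.mem_of_superset (hgnec g) (fun n hn => hmrawS n g hn)
    obtain ⟨s, hsS, hpure⟩ := Ultrafilter.eq_pure_of_finite_mem hSfin hmem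
    refine ⟨s, hsS, ?_⟩
    have hmem2 : {s} ∈ Ultrafilter.map (fun n => mraw n g) U := by
      rw [hpure]
      exact rfl
    rw [Ultrafilter.mem_map] at hmem2
    simpa [Set.preimage] using hmem2
  choose m hmS hmU using hMex
  -- the rays of `m` follow the geodesics toward `c n` for `U`-many `n`
  have hE : ∀ (g : G) (k : ℕ), {n | k ≤ wordDist S g (c n) ∧ ∀ t ≤ k,
      dsgRay m g t = c n * ((w n g).take (wordDist S g (c n) - t)).prod} ∈ U := by
    intro g k
    induction k with
    | zero =>
      refine Filter.mem_of_superset Filter.univ_mem ?_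
      intro n _
      refine ⟨Nat.zero_le _, fun t ht => ?_⟩
      have ht0 : t = 0 := Nat.le_zero.mp ht
      subst ht0
      show g = c n * ((w n g).take (wordDist S g (c n) - 0)).prod
      rw [Nat.sub_zero, ← hwlen n g, List.take_length, hgprod]
    | succ k ih =>
      refine Filter.mem_of_superset
        (Filter.inter_mem (Filter.inter_mem ih (hfar g (k + 1))) (hmU (dsgRay m g k))) ?_
      rintro n ⟨⟨⟨hk, hseg⟩, hk1⟩, hmn⟩
      simp only [Set.mem_setOf_eq] at hk1 hmn ⊢
      refine ⟨hk1, fun t ht => ?_⟩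
      rcases Nat.lt_or_ge t (k + 1) with h | h
      · exact hseg t (by omega)
      · have htk : t = k + 1 := by omega
        subst htk
        have hx := hseg k le_rfl
        have hstep2 : dsgRay m g (k + 1) = pred n (dsgRay m g k) := by
          rw [dsgRay_succ, ← hmn, hstep]
        rw [hstep2, hx, hpred_seg n g (wordDist S g (c n) - k) (by omega)
          (by rw [hwlen]; omega)]
        simp only [Nat.sub_sub]
  -- each ray is geodesic
  have hRay : ∀ g : G, IsGeodesicRay (wordDist S) (dsgRay m g) := by
    intro g i j
    obtain ⟨n, hL, hseg⟩ := Filter.nonempty_of_mem (f := (U : Filter ℕ)) (hE g (max i j))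
    have hgeo : (w n g).length = wordDist S (c n * (w n g).prod) (c n) := by
      rw [hgprod, hwlen]
    have hi : i ≤ wordDist S g (c n) := le_trans (le_max_left _ _) hL
    have hj : j ≤ wordDist S g (c n) := le_trans (le_max_right _ _) hL
    rw [hseg i (le_max_left _ _), hseg j (le_max_right _ _),
      geo_word hsym hgen (c n) (hwS n g) hgeo _ _ (by rw [hwlen]; omega) (by rw [hwlen]; omega)]
    rw [nat_dist_def, nat_dist_def]
    omega
  -- each ray stays close to `c`
  have hdir1 : ∀ (g : G) (i : ℕ), ∃ s, wordDist S (dsgRay m g i) (c s)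
      ≤ δ + wordDist S (c 0) g := by
    intro g i
    obtain ⟨n, hL, hseg⟩ := Filter.nonempty_of_mem (f := (U : Filter ℕ)) (hE g i)
    have hgeo : (w n g).length = wordDist S (c n * (w n g).prod) (c n) := by
      rw [hgprod, hwlen]
    have hgeo0 : (w 0 g).length = wordDist S (c 0 * (w 0 g).prod) (c 0) := by
      rw [hgprod, hwlen]
    set L := wordDist S g (c n) with hLdef
    set cxy : ℕ → G := fun t => c n * ((w n g).take (L - t)).prod with hcxydef
    set cyz : ℕ → G := fun t => c (n - t) with hcyzdef
    set czx : ℕ → G := fun t => c 0 * ((w 0 g).take t).prod with hczxdef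
    have hcxy : IsGeodesicSeg (wordDist S) cxy g (c n) := by
      refine ⟨?_, ?_, ?_⟩
      · show c n * ((w n g).take (L - 0)).prod = g
        rw [Nat.sub_zero, hLdef, ← hwlen n g, List.take_length, hgprod]
      · show c n * ((w n g).take (L - L)).prod = c n
        rw [Nat.sub_self, List.take_zero, List.prod_nil, mul_one]
      · intro a b ha hb
        rw [hLdef] at *
        show wordDist S (c n * ((w n g).take (L - a)).prod)
          (c n * ((w n g).take (L - b)).prod) = Nat.dist a b
        rw [geo_word hsym hgen (c n) (hwS n g) hgeo _ _ (by rw [hwlen]; omega)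
          (by rw [hwlen]; omega), nat_dist_def, nat_dist_def]
        omega
    have hn0 : wordDist S (c n) (c 0) = n := by rw [hc n 0, nat_dist_def]; omega
    have hcyz : IsGeodesicSeg (wordDist S) cyz (c n) (c 0) := by
      refine ⟨by show c (n - 0) = c n; rw [Nat.sub_zero],
        by show c (n - wordDist S (c n) (c 0)) = c 0; rw [hn0, Nat.sub_self], ?_⟩
      intro a b ha hb
      rw [hn0] at ha hb
      show wordDist S (c (n - a)) (c (n - b)) = Nat.dist a b
      rw [hc (n - a) (n - b), nat_dist_def, nat_dist_def]
      omega
    have hd0g : wordDist S (c 0) g = (w 0 g).length := by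
      rw [hwlen, wd_symm hsym hgen]
    have hczx : IsGeodesicSeg (wordDist S) czx (c 0) g := by
      refine ⟨by show c 0 * ((w 0 g).take 0).prod = c 0; simp, ?_, ?_⟩
      · show c 0 * ((w 0 g).take (wordDist S (c 0) g)).prod = g
        rw [hd0g, List.take_length, hgprod]
      · intro a b ha hb
        rw [hd0g] at ha hb
        show wordDist S (c 0 * ((w 0 g).take a).prod) (c 0 * ((w 0 g).take b).prod)
          = Nat.dist a b
        exact geo_word hsym hgen (c 0) (hwS 0 g) hgeo0 a b ha hb
    obtain ⟨p, hp, hclose⟩ := hhyp g (c n) (c 0) cxy cyz czx hcxy hcyz hczx i hL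
    have hray_i : dsgRay m g i = cxy i := hseg i le_rfl
    rcases hp with ⟨t, ht, rfl⟩ | ⟨t, ht, rfl⟩
    · exact ⟨n - t, by rw [hray_i]; exact le_trans hclose (by omega)⟩
    · refine ⟨0, ?_⟩
      rw [hray_i]
      have h2 : wordDist S (czx t) (c 0) ≤ wordDist S (c 0) g := by
        have h3 := hczx.2.2 t 0 ht (Nat.zero_le _)
        rw [hczx.1] at h3
        rw [h3, nat_dist_def]
        simp only [Set.mem_Iic] at ht
        omega
      calc wordDist S (cxy i) (c 0)
          ≤ wordDist S (cxy i) (czx t) + wordDist S (czx t) (c 0) :=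
            wd_triangle hsym hgen _ _ _
        _ ≤ δ + wordDist S (c 0) g := add_le_add hclose h2
  -- reverse direction of the Hausdorff bound
  have hdir2 : ∀ (g : G) (K : ℕ), (∀ t, ∃ s, wordDist S (dsgRay m g t) (c s) ≤ K) →
      ∀ s, wordDist S (c s) (dsgRay m g s) ≤ 2 * K + wordDist S g (c 0) := by
    intro g K h1 s
    obtain ⟨s', hs'⟩ := h1 s
    have h0 : wordDist S (c 0) (c s') = s' := by rw [hc 0 s', nat_dist_def]; omega
    have hr0 : dsgRay m g 0 = g := rfl
    have hrs : wordDist S g (dsgRay m g s) = s := by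
      have h2 := hRay g 0 s
      rw [hr0] at h2
      rw [h2, nat_dist_def]
      omega
    have hR0 : wordDist S (c 0) g = wordDist S g (c 0) := wd_symm hsym hgen _ _
    have hsymd : wordDist S (c s') (dsgRay m g s) = wordDist S (dsgRay m g s) (c s') :=
      wd_symm hsym hgen _ _
    have e1 : s' ≤ wordDist S (c 0) g + s + K := by
      have t1 := wd_triangle hsym hgen (c 0) g (c s')
      have t2 := wd_triangle hsym hgen g (dsgRay m g s) (c s')
      omega
    have e2 : s ≤ wordDist S g (c 0) + s' + K := by
      have t1 := wd_triangle hsym hgen g (c 0) (dsgRay m g s)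
      have t2 := wd_triangle hsym hgen (c 0) (c s') (dsgRay m g s)
      omega
    have t3 := wd_triangle hsym hgen (c s) (c s') (dsgRay m g s)
    have h4 : wordDist S (c s) (c s') = Nat.dist s s' := hc s s'
    rw [nat_dist_def] at h4
    omega
  have hAsymc : ∀ g : G, Asymptotic (wordDist S) (dsgRay m g) c := by
    intro g
    refine ⟨2 * (δ + wordDist S (c 0) g) + wordDist S g (c 0) + (δ + wordDist S (c 0) g),
      fun t => ?_, fun s => ?_⟩
    · obtain ⟨s, hs⟩ := hdir1 g t
      exact ⟨s, le_trans hs (by omega)⟩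
    · exact ⟨s, le_trans (hdir2 g (δ + wordDist S (c 0) g) (hdir1 g) s) (by omega)⟩
  have hpair : ∀ g h : G, Asymptotic (wordDist S) (dsgRay m g) (dsgRay m h) := by
    intro g h
    obtain ⟨K1, h1a, h1b⟩ := hAsymc g
    obtain ⟨K2, h2a, h2b⟩ := hAsymc h
    refine ⟨K1 + K2, fun t => ?_, fun s => ?_⟩
    · obtain ⟨u, hu⟩ := h1a t
      obtain ⟨v, hv⟩ := h2b u
      exact ⟨v, le_trans (wd_triangle hsym hgen _ _ _) (add_le_add hu hv)⟩
    · obtain ⟨u, hu⟩ := h2a s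
      obtain ⟨v, hv⟩ := h1b u
      refine ⟨v, le_trans (le_trans (wd_triangle hsym hgen _ _ _)
        (add_le_add hu hv)) (by omega)⟩
  exact ⟨m, ⟨hmS, hRay, hpair⟩, hAsymc⟩
end
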